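/- Under the distributed two-time-scale setup, define the residual V_k = ‖Ŷ_k‖ + (β_k/α_k)·‖X̂_k‖. Then for every k ≥ 0, V_{k+1} ≤ σ·V_k + 2β_k·(‖X̂_k‖ + ‖Ŷ_k‖) + 2√N·(R+C)·β_k. -/

import Mathlib

/-!
Writing `P = I - 𝟙𝟙ᵀ/N` for the centering matrix, `X̂ = P X`, and `P` commutes with every
doubly stochastic `W`. Hence `X̂_{k+1} = W X̂_k - α_k P G_k`, where the drift
`G_k = X_k A₁₁ᵀ + Y_k A₁₂ᵀ - b₁ + ξ_k` satisfies `‖P G_k‖ ≤ ‖X̂_k‖ + ‖Ŷ_k‖ + √N (R + C)`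
(the `A`'s are contractions acting on rows and `P` is a contraction), while `W` contracts
`X̂_k` by `σ` because its columns sum to zero. The same holds for `Ŷ` with `β_k`. Finally
`β_k / α_k = (β₀ / α₀) (k + 1)^(-1/3)` is nonincreasing, so weighting the `X̂`-estimate by
`β_k / α_k` and adding the `Ŷ`-estimate gives the bound on `V_{k+1}`.
-/

/-- The Euclidean norm of a vector (represented as a function into `ℝ`). -/
noncomputable def eucNorm {n : ℕ} (v : Fin n → ℝ) : ℝ :=
  Real.sqrt (∑ i, v i ^ 2)

/-- The Frobenius norm of an `N×d` real matrix. -/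
noncomputable def fnorm {N d : ℕ} (M : Matrix (Fin N) (Fin d) ℝ) : ℝ :=
  Real.sqrt (∑ i, ∑ j, M i j ^ 2)

open Matrix Finset

section Frobenius

attribute [local instance] Matrix.frobeniusNormedAddCommGroup Matrix.frobeniusNormedSpace

variable {N d : ℕ}

theorem fnorm_eq_norm (M : Matrix (Fin N) (Fin d) ℝ) : fnorm M = ‖M‖ := by
  simp only [fnorm, Matrix.frobenius_norm_def, Real.norm_eq_abs, Real.rpow_two, sq_abs,
    Real.sqrt_eq_rpow, one_div]

theorem fnorm_add_le (M M' : Matrix (Fin N) (Fin d) ℝ) :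
    fnorm (M + M') ≤ fnorm M + fnorm M' := by
  simpa only [fnorm_eq_norm] using norm_add_le M M'

theorem fnorm_sub_le (M M' : Matrix (Fin N) (Fin d) ℝ) :
    fnorm (M - M') ≤ fnorm M + fnorm M' := by
  simpa only [fnorm_eq_norm] using norm_sub_le M M'

theorem fnorm_smul (a : ℝ) (M : Matrix (Fin N) (Fin d) ℝ) :
    fnorm (a • M) = |a| * fnorm M := by
  simp only [fnorm_eq_norm, norm_smul, Real.norm_eq_abs]

end Frobenius

section RowBounds

variable {N d : ℕ}

theorem eucNorm_nonneg {n : ℕ} (v : Fin n → ℝ) : 0 ≤ eucNorm v := Real.sqrt_nonneg _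

theorem fnorm_nonneg (M : Matrix (Fin N) (Fin d) ℝ) : 0 ≤ fnorm M := Real.sqrt_nonneg _

theorem sq_eucNorm {n : ℕ} (v : Fin n → ℝ) : eucNorm v ^ 2 = ∑ i, v i ^ 2 :=
  Real.sq_sqrt (by positivity)

theorem sq_fnorm (M : Matrix (Fin N) (Fin d) ℝ) : fnorm M ^ 2 = ∑ i, eucNorm (M i) ^ 2 := by
  simp only [fnorm, sq_eucNorm]
  exact Real.sq_sqrt (by positivity)

theorem fnorm_transpose (M : Matrix (Fin N) (Fin d) ℝ) : fnorm Mᵀ = fnorm M := by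
  rw [fnorm, fnorm, Finset.sum_comm]
  rfl

theorem fnorm_le_mul_of_eucNorm_row_le {M M' : Matrix (Fin N) (Fin d) ℝ} {c : ℝ} (hc : 0 ≤ c)
    (h : ∀ i, eucNorm (M i) ≤ c * eucNorm (M' i)) : fnorm M ≤ c * fnorm M' := by
  refine le_of_sq_le_sq ?_ (mul_nonneg hc (fnorm_nonneg M'))
  rw [mul_pow, sq_fnorm, sq_fnorm, Finset.mul_sum]
  gcongr with i
  simpa [mul_pow] using pow_le_pow_left₀ (eucNorm_nonneg _) (h i) 2

theorem fnorm_le_sqrt_mul_of_eucNorm_row_le {M : Matrix (Fin N) (Fin d) ℝ} {R : ℝ}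
    (hR : 0 ≤ R) (h : ∀ i, eucNorm (M i) ≤ R) : fnorm M ≤ √N * R := by
  refine le_of_sq_le_sq ?_ (by positivity)
  rw [mul_pow, Real.sq_sqrt N.cast_nonneg, sq_fnorm]
  calc ∑ i, eucNorm (M i) ^ 2 ≤ ∑ _ : Fin N, R ^ 2 := by
        gcongr with i
        exacts [eucNorm_nonneg _, h i]
    _ = N * R ^ 2 := by simp

theorem fnorm_mul_transpose_le (A : Matrix (Fin d) (Fin d) ℝ)
    (hA : ∀ v, eucNorm (A *ᵥ v) ≤ eucNorm v) (M : Matrix (Fin N) (Fin d) ℝ) :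
    fnorm (M * Aᵀ) ≤ fnorm M := by
  simpa using fnorm_le_mul_of_eucNorm_row_le zero_le_one (M := M * Aᵀ) (M' := M) fun i => by
    simpa [mul_apply_eq_vecMul, vecMul_transpose] using hA (M i)

theorem fnorm_mul_le_of_sum_col_eq_zero {W : Matrix (Fin N) (Fin N) ℝ} {σ : ℝ} (hσ : 0 ≤ σ)
    (hW : ∀ v : Fin N → ℝ, ∑ i, v i = 0 → eucNorm (W *ᵥ v) ≤ σ * eucNorm v)
    {M : Matrix (Fin N) (Fin d) ℝ} (hM : ∀ j, ∑ i, M i j = 0) :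
    fnorm (W * M) ≤ σ * fnorm M := by
  rw [← fnorm_transpose, ← fnorm_transpose M]
  refine fnorm_le_mul_of_eucNorm_row_le hσ fun j => ?_
  rw [transpose_mul, mul_apply_eq_vecMul, vecMul_transpose]
  exact hW _ (hM j)

end RowBounds

section Centering

variable {N d : ℕ}

noncomputable def centering (N : ℕ) : Matrix (Fin N) (Fin N) ℝ :=
  1 - (N : ℝ)⁻¹ • of fun _ _ => 1

theorem centering_mul_apply (M : Matrix (Fin N) (Fin d) ℝ) (i : Fin N) (j : Fin d) :
    (centering N * M) i j = M i j - (N : ℝ)⁻¹ * ∑ l, M l j := by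
  rw [centering, Matrix.sub_mul, Matrix.one_mul, Matrix.smul_mul]
  simp [mul_apply, mul_sum]

theorem of_sub_mean_eq_centering_mul (M : Matrix (Fin N) (Fin d) ℝ) :
    (of fun i j => M i j - ((1 / (N : ℝ)) • ∑ l, M l) j) = centering N * M := by
  ext i j
  rw [of_apply, centering_mul_apply, Pi.smul_apply, smul_eq_mul, one_div]
  congr 2
  exact Finset.sum_apply j _ _

theorem sum_centering_mul_apply (hN : N ≠ 0) (M : Matrix (Fin N) (Fin d) ℝ) (j : Fin d) :
    ∑ i, (centering N * M) i j = 0 := by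
  simp only [centering_mul_apply, sum_sub_distrib, sum_const, card_univ, Fintype.card_fin,
    nsmul_eq_mul]
  field_simp
  ring

theorem centering_mul_comm {W : Matrix (Fin N) (Fin N) ℝ} (hrow : ∀ i, ∑ j, W i j = 1)
    (hcol : ∀ j, ∑ i, W i j = 1) : centering N * W = W * centering N := by
  have hJW : (of fun _ _ => 1 : Matrix (Fin N) (Fin N) ℝ) * W = of fun _ _ => 1 := by
    ext i j; simp [mul_apply, hcol]
  have hWJ : W * (of fun _ _ => 1 : Matrix (Fin N) (Fin N) ℝ) = of fun _ _ => 1 := by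
    ext i j; simp [mul_apply, hrow]
  simp only [centering, sub_mul, mul_sub, one_mul, mul_one, smul_mul_assoc, mul_smul_comm, hJW,
    hWJ]

theorem sum_sub_mean_sq_le (v : Fin N → ℝ) :
    ∑ i, (v i - (N : ℝ)⁻¹ * ∑ l, v l) ^ 2 ≤ ∑ i, v i ^ 2 := by
  rcases Nat.eq_zero_or_pos N with rfl | hN
  · simp
  set m := (N : ℝ)⁻¹ * ∑ l, v l
  have hsum : ∑ l, v l = N * m := by simp only [m]; field_simp
  have hexpand : ∑ i, (v i - m) ^ 2 = ∑ i, v i ^ 2 - N * m ^ 2 := by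
    simp only [sub_sq, sum_add_distrib, sum_sub_distrib, ← sum_mul, ← mul_sum, hsum, sum_const,
      card_univ, Fintype.card_fin, nsmul_eq_mul]
    ring
  rw [hexpand]
  have : 0 ≤ (N : ℝ) * m ^ 2 := by positivity
  linarith

theorem fnorm_centering_mul_le (M : Matrix (Fin N) (Fin d) ℝ) :
    fnorm (centering N * M) ≤ fnorm M := by
  rw [← fnorm_transpose, ← fnorm_transpose M, ← one_mul (fnorm Mᵀ)]
  refine fnorm_le_mul_of_eucNorm_row_le zero_le_one fun j => ?_
  rw [one_mul]
  refine Real.sqrt_le_sqrt ?_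
  simpa only [transpose_apply, centering_mul_apply] using sum_sub_mean_sq_le (Mᵀ j)

end Centering

section ConsensusStep

variable {N d : ℕ}

theorem eq_mul_sub_smul_of_row_eq {W : Matrix (Fin N) (Fin N) ℝ}
    {A B : Matrix (Fin d) (Fin d) ℝ} {Z' Z X Y b ξ : Matrix (Fin N) (Fin d) ℝ} {a : ℝ}
    (h : ∀ i, Z' i = ∑ j, W i j • Z j - a • (A *ᵥ X i + B *ᵥ Y i - b i + ξ i)) :
    Z' = W * Z - a • (X * Aᵀ + Y * Bᵀ - b + ξ) := by
  funext i
  change Z' i = (W * Z) i - a • ((X * Aᵀ) i + (Y * Bᵀ) i - b i + ξ i)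
  simp only [h i, mul_apply_eq_vecMul, vecMul_transpose]
  rw [vecMul_eq_sum]

theorem fnorm_centering_step_le (hN : N ≠ 0) {W : Matrix (Fin N) (Fin N) ℝ}
    (hrow : ∀ i, ∑ j, W i j = 1) (hcol : ∀ j, ∑ i, W i j = 1) {σ : ℝ} (hσ : 0 ≤ σ)
    (hW : ∀ v : Fin N → ℝ, ∑ i, v i = 0 → eucNorm (W *ᵥ v) ≤ σ * eucNorm v)
    {A B : Matrix (Fin d) (Fin d) ℝ} (hA : ∀ v, eucNorm (A *ᵥ v) ≤ eucNorm v)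
    (hB : ∀ v, eucNorm (B *ᵥ v) ≤ eucNorm v) {b ξ : Matrix (Fin N) (Fin d) ℝ} {R C : ℝ}
    (hR : 0 ≤ R) (hC : 0 ≤ C) (hb : ∀ i, eucNorm (b i) ≤ R) (hξ : ∀ i, eucNorm (ξ i) ≤ C)
    {a : ℝ} (ha : 0 ≤ a) (Z X Y : Matrix (Fin N) (Fin d) ℝ) :
    fnorm (centering N * (W * Z - a • (X * Aᵀ + Y * Bᵀ - b + ξ)))
      ≤ σ * fnorm (centering N * Z)
        + a * (fnorm (centering N * X) + fnorm (centering N * Y) + √N * (R + C)) := by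
  set P := centering N
  have hsplit : P * (W * Z - a • (X * Aᵀ + Y * Bᵀ - b + ξ))
      = W * (P * Z) - a • ((P * X) * Aᵀ + (P * Y) * Bᵀ - P * b + P * ξ) := by
    simp only [Matrix.mul_sub, Matrix.mul_smul, Matrix.mul_add, ← Matrix.mul_assoc, P,
      centering_mul_comm hrow hcol]
  have hdrift : fnorm ((P * X) * Aᵀ + (P * Y) * Bᵀ - P * b + P * ξ)
      ≤ fnorm (P * X) + fnorm (P * Y) + √N * (R + C) := by
    calc _ ≤ fnorm ((P * X) * Aᵀ) + fnorm ((P * Y) * Bᵀ) + fnorm (P * b) + fnorm (P * ξ) :=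
          (fnorm_add_le _ _).trans <| by
            gcongr
            exact (fnorm_sub_le _ _).trans (by gcongr; exact fnorm_add_le _ _)
      _ ≤ fnorm (P * X) + fnorm (P * Y) + √N * R + √N * C := by
          gcongr
          · exact fnorm_mul_transpose_le A hA _
          · exact fnorm_mul_transpose_le B hB _
          · exact (fnorm_centering_mul_le b).trans (fnorm_le_sqrt_mul_of_eucNorm_row_le hR hb)
          · exact (fnorm_centering_mul_le ξ).trans (fnorm_le_sqrt_mul_of_eucNorm_row_le hC hξ)
      _ = _ := by ring
  rw [hsplit]
  calc _ ≤ fnorm (W * (P * Z))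
        + |a| * fnorm ((P * X) * Aᵀ + (P * Y) * Bᵀ - P * b + P * ξ) := by
        rw [← fnorm_smul]; exact fnorm_sub_le _ _
    _ ≤ _ := by
        rw [abs_of_nonneg ha]
        gcongr
        exact fnorm_mul_le_of_sum_col_eq_zero hσ hW (sum_centering_mul_apply hN Z)

end ConsensusStep

theorem stepRatio_antitoneOn {α0 β0 : ℝ} (h : 0 ≤ β0 / α0) :
    AntitoneOn (fun t : ℝ => β0 / t / (α0 / t ^ ((2 : ℝ) / 3))) (Set.Ioi 0) := by
  have hrpow : ∀ t : ℝ, 0 < t →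
      β0 / t / (α0 / t ^ ((2 : ℝ) / 3)) = β0 / α0 * t ^ ((2 : ℝ) / 3 - 1) := by
    intro t ht
    rw [Real.rpow_sub_one ht.ne', div_div_eq_mul_div]
    ring
  intro s hs t ht hst
  simp only [hrpow s hs, hrpow t ht]
  exact mul_le_mul_of_nonneg_left (Real.rpow_le_rpow_of_nonpos hs hst (by norm_num)) h

theorem stmt_10_general
    {N d : ℕ} (hN : 0 < N) (R C : ℝ) (hR : 0 ≤ R) (hC : 0 ≤ C)
    (W V : Matrix (Fin N) (Fin N) ℝ)
    (hWrow : ∀ i, ∑ j, W i j = 1)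
    (hWcol : ∀ j, ∑ i, W i j = 1)
    (hVrow : ∀ i, ∑ j, V i j = 1)
    (hVcol : ∀ j, ∑ i, V i j = 1)
    (σ : ℝ) (hσ0 : 0 < σ)
    (hWcontract : ∀ v : Fin N → ℝ, (∑ i, v i = 0) → eucNorm (W.mulVec v) ≤ σ * eucNorm v)
    (hVcontract : ∀ v : Fin N → ℝ, (∑ i, v i = 0) → eucNorm (V.mulVec v) ≤ σ * eucNorm v)
    (A11 A12 A21 A22 : Matrix (Fin d) (Fin d) ℝ)
    (hA11 : ∀ v, eucNorm (A11.mulVec v) ≤ eucNorm v)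
    (hA12 : ∀ v, eucNorm (A12.mulVec v) ≤ eucNorm v)
    (hA21 : ∀ v, eucNorm (A21.mulVec v) ≤ eucNorm v)
    (hA22 : ∀ v, eucNorm (A22.mulVec v) ≤ eucNorm v)
    (b1 b2 : Fin N → Fin d → ℝ)
    (hb1 : ∀ i, eucNorm (b1 i) ≤ R) (hb2 : ∀ i, eucNorm (b2 i) ≤ R)
    (ξ ψ : ℕ → Fin N → Fin d → ℝ)
    (hξ : ∀ k i, eucNorm (ξ k i) ≤ C) (hψ : ∀ k i, eucNorm (ψ k i) ≤ C)
    (α0 β0 : ℝ) (hβ0 : 0 < β0) (hβα : β0 ≤ α0)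
    (α β : ℕ → ℝ)
    (hα : ∀ k, α k = α0 / ((k : ℝ) + 1) ^ ((2 : ℝ) / 3))
    (hβ : ∀ k, β k = β0 / ((k : ℝ) + 1))
    (x y : ℕ → Fin N → Fin d → ℝ)
    (hxrec : ∀ k i, x (k + 1) i =
      (∑ j, W i j • x k j) -
        α k • (A11.mulVec (x k i) + A12.mulVec (y k i) - b1 i + ξ k i))
    (hyrec : ∀ k i, y (k + 1) i =
      (∑ j, V i j • y k j) -
        β k • (A21.mulVec (x k i) + A22.mulVec (y k i) - b2 i + ψ k i))
    (xbar ybar : ℕ → Fin d → ℝ)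
    (hxbar : ∀ k, xbar k = (1 / (N : ℝ)) • ∑ i, x k i)
    (hybar : ∀ k, ybar k = (1 / (N : ℝ)) • ∑ i, y k i)
    (Xhat Yhat : ℕ → Matrix (Fin N) (Fin d) ℝ)
    (hXhat : ∀ k, Xhat k = Matrix.of fun i j => x k i j - xbar k j)
    (hYhat : ∀ k, Yhat k = Matrix.of fun i j => y k i j - ybar k j)
    (Vres : ℕ → ℝ)
    (hVres : ∀ k, Vres k = fnorm (Yhat k) + (β k / α k) * fnorm (Xhat k))
    (k : ℕ) :
    Vres (k + 1) ≤ σ * Vres k + 2 * β k * (fnorm (Xhat k) + fnorm (Yhat k))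
      + 2 * Real.sqrt N * (R + C) * β k := by
  have hα0 : 0 < α0 := hβ0.trans_le hβα
  have hαpos : ∀ m, 0 < α m := fun m => by rw [hα]; positivity
  have hβpos : ∀ m, 0 < β m := fun m => by rw [hβ]; positivity
  have hratio : β (k + 1) / α (k + 1) ≤ β k / α k := by
    simp only [hα, hβ]
    push_cast
    exact stepRatio_antitoneOn (div_pos hβ0 hα0).le (Set.mem_Ioi.2 (by positivity))
      (Set.mem_Ioi.2 (by positivity)) (by linarith)
  set X : ℕ → Matrix (Fin N) (Fin d) ℝ := x
  set Y : ℕ → Matrix (Fin N) (Fin d) ℝ := y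
  have hXc : ∀ m, Xhat m = centering N * X m := fun m => by
    rw [hXhat, hxbar, of_sub_mean_eq_centering_mul]
  have hYc : ∀ m, Yhat m = centering N * Y m := fun m => by
    rw [hYhat, hybar, of_sub_mean_eq_centering_mul]
  set S := fnorm (Xhat k) + fnorm (Yhat k) + √N * (R + C)
  have hXstep : fnorm (Xhat (k + 1)) ≤ σ * fnorm (Xhat k) + α k * S := by
    simpa only [← eq_mul_sub_smul_of_row_eq (hxrec k), ← hXc, ← hYc] using
      fnorm_centering_step_le hN.ne' hWrow hWcol hσ0.le hWcontract hA11 hA12 hR hC hb1 (hξ k)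
        (hαpos k).le (X k) (X k) (Y k)
  have hYstep : fnorm (Yhat (k + 1)) ≤ σ * fnorm (Yhat k) + β k * S := by
    simpa only [← eq_mul_sub_smul_of_row_eq (hyrec k), ← hXc, ← hYc] using
      fnorm_centering_step_le hN.ne' hVrow hVcol hσ0.le hVcontract hA21 hA22 hR hC hb2 (hψ k)
        (hβpos k).le (Y k) (X k) (Y k)
  rw [hVres, hVres]
  calc _ ≤ fnorm (Yhat (k + 1)) + β k / α k * fnorm (Xhat (k + 1)) := by
        gcongr; exact fnorm_nonneg _
    _ ≤ (σ * fnorm (Yhat k) + β k * S) + β k / α k * (σ * fnorm (Xhat k) + α k * S) := by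
        gcongr
        exact (div_pos (hβpos k) (hαpos k)).le
    _ = _ := by
        linear_combination S * div_mul_cancel₀ (β k) (hαpos k).ne'

/-- Under the distributed two-time-scale setup, with the residual
`V_k = ‖Ŷ_k‖ + (β_k/α_k)‖X̂_k‖`, for every `k ≥ 0`,
`V_{k+1} ≤ σ·V_k + 2β_k(‖X̂_k‖ + ‖Ŷ_k‖) + 2√N(R+C)β_k`. -/
theorem stmt_10
    {N d : ℕ} (hN : 0 < N) (hd : 0 < d) (R C : ℝ) (hR : 0 ≤ R) (hC : 0 ≤ C)
    (W V : Matrix (Fin N) (Fin N) ℝ)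
    (hWnonneg : ∀ i j, 0 ≤ W i j) (hWrow : ∀ i, ∑ j, W i j = 1)
    (hWcol : ∀ j, ∑ i, W i j = 1)
    (hVnonneg : ∀ i j, 0 ≤ V i j) (hVrow : ∀ i, ∑ j, V i j = 1)
    (hVcol : ∀ j, ∑ i, V i j = 1)
    (σ : ℝ) (hσ0 : 0 < σ) (hσ1 : σ < 1)
    (hWcontract : ∀ v : Fin N → ℝ, (∑ i, v i = 0) → eucNorm (W.mulVec v) ≤ σ * eucNorm v)
    (hVcontract : ∀ v : Fin N → ℝ, (∑ i, v i = 0) → eucNorm (V.mulVec v) ≤ σ * eucNorm v)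
    (A11 A12 A21 A22 : Matrix (Fin d) (Fin d) ℝ)
    (hA11 : ∀ v, eucNorm (A11.mulVec v) ≤ eucNorm v)
    (hA12 : ∀ v, eucNorm (A12.mulVec v) ≤ eucNorm v)
    (hA21 : ∀ v, eucNorm (A21.mulVec v) ≤ eucNorm v)
    (hA22 : ∀ v, eucNorm (A22.mulVec v) ≤ eucNorm v)
    (b1 b2 : Fin N → Fin d → ℝ)
    (hb1 : ∀ i, eucNorm (b1 i) ≤ R) (hb2 : ∀ i, eucNorm (b2 i) ≤ R)
    (ξ ψ : ℕ → Fin N → Fin d → ℝ)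
    (hξ : ∀ k i, eucNorm (ξ k i) ≤ C) (hψ : ∀ k i, eucNorm (ψ k i) ≤ C)
    (α0 β0 : ℝ) (hβ0 : 0 < β0) (hβα : β0 ≤ α0)
    (α β : ℕ → ℝ)
    (hα : ∀ k, α k = α0 / ((k : ℝ) + 1) ^ ((2 : ℝ) / 3))
    (hβ : ∀ k, β k = β0 / ((k : ℝ) + 1))
    (x y : ℕ → Fin N → Fin d → ℝ)
    (hx0 : ∀ i, x 0 i = 0) (hy0 : ∀ i, y 0 i = 0)
    (hxrec : ∀ k i, x (k + 1) i =
      (∑ j, W i j • x k j) -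
        α k • (A11.mulVec (x k i) + A12.mulVec (y k i) - b1 i + ξ k i))
    (hyrec : ∀ k i, y (k + 1) i =
      (∑ j, V i j • y k j) -
        β k • (A21.mulVec (x k i) + A22.mulVec (y k i) - b2 i + ψ k i))
    (xbar ybar : ℕ → Fin d → ℝ)
    (hxbar : ∀ k, xbar k = (1 / (N : ℝ)) • ∑ i, x k i)
    (hybar : ∀ k, ybar k = (1 / (N : ℝ)) • ∑ i, y k i)
    (Xhat Yhat : ℕ → Matrix (Fin N) (Fin d) ℝ)
    (hXhat : ∀ k, Xhat k = Matrix.of fun i j => x k i j - xbar k j)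
    (hYhat : ∀ k, Yhat k = Matrix.of fun i j => y k i j - ybar k j)
    (Vres : ℕ → ℝ)
    (hVres : ∀ k, Vres k = fnorm (Yhat k) + (β k / α k) * fnorm (Xhat k))
    (k : ℕ) :
    Vres (k + 1) ≤ σ * Vres k + 2 * β k * (fnorm (Xhat k) + fnorm (Yhat k))
      + 2 * Real.sqrt N * (R + C) * β k :=
  stmt_10_general hN R C hR hC W V hWrow hWcol hVrow hVcol σ hσ0 hWcontract hVcontract A11 A12 A21
    A22 hA11 hA12 hA21 hA22 b1 b2 hb1 hb2 ξ ψ hξ hψ α0 β0 hβ0 hβα α β hα hβ x y hxrec hyrec xbar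
    ybar hxbar hybar Xhat Yhat hXhat hYhat Vres hVres k
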